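/- arXiv:2604.21333 — 2 statements merged into one kernel-verified Lean document; each statement's English description precedes it below -/
import Mathlib

section
/- Let M₁, M₂ be unitary matrices of the same size, and suppose M₁M₂† = V D² V† for a unitary V and a diagonal unitary D (so D² is a diagonalization of M₁M₂†). Setting W = D V† M₂, the matrix W is unitary and the block matrix diag(M₁, M₂) factors as diag(V, V) · diag(D, D†) · diag(W, W). -/
open Matrix

/-- Demultiplexing: if `M₁ M₂ᴴ = V D² Vᴴ` with `V` unitary and `D` a diagonal
unitary, then `W := D Vᴴ M₂` is unitary,
`diag(M₁, M₂) = diag(V, V)·diag(D, Dᴴ)·diag(W, W)`, and indeed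
`M₁ = V D W` and `M₂ = V Dᴴ W`. -/
theorem demultiplex (k : ℕ) (M₁ M₂ V D : Matrix (Fin k) (Fin k) ℂ)
    (hM₁ : M₁ ∈ Matrix.unitaryGroup (Fin k) ℂ)
    (hM₂ : M₂ ∈ Matrix.unitaryGroup (Fin k) ℂ)
    (hV : V ∈ Matrix.unitaryGroup (Fin k) ℂ)
    (hD : D ∈ Matrix.unitaryGroup (Fin k) ℂ)
    (hDdiag : D.IsDiag)
    (hfac : M₁ * M₂ᴴ = V * (D * D) * Vᴴ) :
    (D * Vᴴ * M₂) ∈ Matrix.unitaryGroup (Fin k) ℂ ∧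
    M₁ = V * D * (D * Vᴴ * M₂) ∧
    M₂ = V * Dᴴ * (D * Vᴴ * M₂) ∧
    Matrix.fromBlocks M₁ 0 0 M₂ =
      Matrix.fromBlocks V 0 0 V * Matrix.fromBlocks D 0 0 Dᴴ *
        Matrix.fromBlocks (D * Vᴴ * M₂) 0 0 (D * Vᴴ * M₂) := by
  have hVstar : Vᴴ ∈ Matrix.unitaryGroup (Fin k) ℂ := by
    rw [← Matrix.star_eq_conjTranspose]; exact Unitary.star_mem hV
  have hW : (D * Vᴴ * M₂) ∈ Matrix.unitaryGroup (Fin k) ℂ :=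
    mul_mem (mul_mem hD hVstar) hM₂
  have hDD : Dᴴ * D = 1 := by
    have := hD.1; rwa [Matrix.star_eq_conjTranspose] at this
  have hVV : V * Vᴴ = 1 := by
    have := hV.2; rwa [Matrix.star_eq_conjTranspose] at this
  have hM2 : M₂ᴴ * M₂ = 1 := by
    have := hM₂.1; rwa [Matrix.star_eq_conjTranspose] at this
  have h2 : M₂ = V * Dᴴ * (D * Vᴴ * M₂) := by
    calc M₂ = V * (Dᴴ * D) * Vᴴ * M₂ := by rw [hDD]; simp [hVV, Matrix.mul_assoc, ← Matrix.mul_assoc, hVV]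
    _ = V * Dᴴ * (D * Vᴴ * M₂) := by noncomm_ring
  have h1 : M₁ = V * D * (D * Vᴴ * M₂) := by
    calc M₁ = M₁ * (M₂ᴴ * M₂) := by rw [hM2, mul_one]
    _ = (M₁ * M₂ᴴ) * M₂ := by noncomm_ring
    _ = V * (D * D) * Vᴴ * M₂ := by rw [hfac]
    _ = V * D * (D * Vᴴ * M₂) := by noncomm_ring
  refine ⟨hW, h1, h2, ?_⟩
  rw [Matrix.fromBlocks_multiply, Matrix.fromBlocks_multiply]
  simp [← h1, ← h2]
end

section
/- The matrix e^{iπ/8}·I (a scalar multiple of the identity) is in SU(2^4), but its diagonal entry e^{iπ/8} does not lie in the ring ℤ[1/√2, i] = 𝔻[ω]; hence there is a 4-qubit special unitary whose entries are not all in 𝔻[ω]. -/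
open Complex Matrix Polynomial IntermediateField

noncomputable def omega8 : ℂ := Complex.exp (Real.pi * Complex.I / 4)

noncomputable def Domega : Set ℂ :=
  {z : ℂ | ∃ (a b c d : ℤ) (k : ℕ),
    z = (a * omega8 ^ 3 + b * omega8 ^ 2 + c * omega8 + d) / (Real.sqrt 2 : ℂ) ^ k}

lemma cs_ne : (Real.sqrt 2 : ℂ) ≠ 0 := by
  simp [Real.sqrt_ne_zero'.2 (by norm_num : (0:ℝ) < 2)]

lemma cs_sq : (Real.sqrt 2 : ℂ) ^ 2 = 2 := by
  rw [← Complex.ofReal_pow, Real.sq_sqrt (by norm_num : (0:ℝ) ≤ 2)]; norm_num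

lemma homega : omega8 = (1 + Complex.I) / (Real.sqrt 2 : ℂ) := by
  unfold omega8
  rw [show (Real.pi : ℂ) * Complex.I / 4 = (Real.pi / 4 : ℝ) * Complex.I by push_cast; ring,
    Complex.exp_mul_I, ← Complex.ofReal_cos, ← Complex.ofReal_sin,
    Real.cos_pi_div_four, Real.sin_pi_div_four]
  have hs := cs_ne
  field_simp
  push_cast
  linear_combination ((1 + Complex.I) / 2) * cs_sq

lemma omega8_sq : omega8 ^ 2 = Complex.I := by
  rw [homega]
  field_simp
  linear_combination -Complex.I * cs_sq + Complex.I_sq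

lemma sqrt2_eq : (Real.sqrt 2 : ℂ) = omega8 - omega8 ^ 3 := by
  have h3 : omega8 ^ 3 = Complex.I * omega8 := by
    rw [pow_succ, omega8_sq]
  rw [h3, homega]
  have hs := cs_ne
  field_simp
  linear_combination cs_sq + Complex.I_sq

lemma hprim16 : IsPrimitiveRoot (Complex.exp (Real.pi * Complex.I / 8)) 16 := by
  have h := Complex.isPrimitiveRoot_exp 16 (by norm_num)
  convert h using 2
  push_cast
  ring

lemma hprim8 : IsPrimitiveRoot omega8 8 := by
  have h := Complex.isPrimitiveRoot_exp 8 (by norm_num)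
  unfold omega8
  convert h using 2
  push_cast
  ring

lemma zeta_sq : Complex.exp (Real.pi * Complex.I / 8) ^ 2 = omega8 := by
  unfold omega8
  rw [← Complex.exp_nat_mul]
  congr 1
  push_cast
  ring

lemma zeta_not_mem : Complex.exp (Real.pi * Complex.I / 8) ∉ Domega := by
  set ζ := Complex.exp (Real.pi * Complex.I / 8) with hζ
  rintro ⟨a, b, c, d, k, heq⟩
  set K : IntermediateField ℚ ℂ := ℚ⟮omega8⟯ with hK
  have hωK : omega8 ∈ K := mem_adjoin_simple_self ℚ omega8
  have hsK : (Real.sqrt 2 : ℂ) ∈ K := by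
    rw [sqrt2_eq]; exact sub_mem hωK (pow_mem hωK 3)
  have hζK : ζ ∈ K := by
    rw [heq]
    refine div_mem ?_ (pow_mem hsK k)
    exact add_mem (add_mem (add_mem (mul_mem (intCast_mem K a) (pow_mem hωK 3))
      (mul_mem (intCast_mem K b) (pow_mem hωK 2))) (mul_mem (intCast_mem K c) hωK))
      (intCast_mem K d)
  have hle : ℚ⟮ζ⟯ ≤ K := by rw [adjoin_simple_le_iff]; exact hζK
  have hge : K ≤ ℚ⟮ζ⟯ := by
    rw [hK, adjoin_simple_le_iff, ← zeta_sq]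
    exact pow_mem (mem_adjoin_simple_self ℚ ζ) 2
  have heqF : ℚ⟮ζ⟯ = K := le_antisymm hle hge
  have hintζ : IsIntegral ℚ ζ := (hprim16.isIntegral (by norm_num)).tower_top
  have hintω : IsIntegral ℚ omega8 := (hprim8.isIntegral (by norm_num)).tower_top
  have h1 : Module.finrank ℚ ℚ⟮ζ⟯ = 8 := by
    rw [IntermediateField.adjoin.finrank hintζ,
      ← Polynomial.cyclotomic_eq_minpoly_rat hprim16 (by norm_num),
      Polynomial.natDegree_cyclotomic,
      show (16:ℕ) = 2^4 by norm_num, Nat.totient_prime_pow Nat.prime_two (by norm_num)]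
    norm_num
  have h2 : Module.finrank ℚ K = 4 := by
    rw [hK, IntermediateField.adjoin.finrank hintω,
      ← Polynomial.cyclotomic_eq_minpoly_rat hprim8 (by norm_num),
      Polynomial.natDegree_cyclotomic,
      show (8:ℕ) = 2^3 by norm_num, Nat.totient_prime_pow Nat.prime_two (by norm_num)]
    norm_num
  rw [heqF] at h1
  exact absurd (h1.symm.trans h2) (by norm_num)


theorem aux_smul_one_det (n : Type) [DecidableEq n] [Fintype n] (c : ℂ) :
    (c • (1 : Matrix n n ℂ)).det = c ^ Fintype.card n := by
  simp

theorem aux_smul_one_unitary (n : Type) [DecidableEq n] [Fintype n] (c : ℂ)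
    (h : c * (starRingEnd ℂ) c = 1) :
    (c • (1 : Matrix n n ℂ)) ∈ Matrix.unitaryGroup n ℂ := by
  rw [Matrix.mem_unitaryGroup_iff, star_smul, star_one, smul_mul_assoc, mul_smul_comm,
    one_mul, smul_smul, show star c = (starRingEnd ℂ) c from rfl, h, one_smul]

/-- `e^{iπ/8}·I₁₆` lies in `SU(2⁴)` (it is unitary with determinant 1), yet its
diagonal entry `e^{iπ/8}` does not lie in `𝔻[ω]`; hence there is a 4-qubit
special unitary whose entries are not all in `𝔻[ω]`. -/
theorem phase_identity_not_in_Domega :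
    Complex.exp (Real.pi * Complex.I / 8) • (1 : Matrix (Fin 16) (Fin 16) ℂ) ∈
      Matrix.unitaryGroup (Fin 16) ℂ ∧
    (Complex.exp (Real.pi * Complex.I / 8) • (1 : Matrix (Fin 16) (Fin 16) ℂ)).det = 1 ∧
    Complex.exp (Real.pi * Complex.I / 8) ∉ Domega := by
  set ζ := Complex.exp (Real.pi * Complex.I / 8) with hζ
  have hconj : (starRingEnd ℂ) ζ = Complex.exp (-(Real.pi * Complex.I / 8)) := by
    rw [hζ, ← Complex.exp_conj]
    congr 1
    simp [map_div₀, Complex.conj_I, Complex.conj_ofReal, map_ofNat]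
    ring
  have hmul : ζ * (starRingEnd ℂ) ζ = 1 := by
    rw [hconj, hζ, ← Complex.exp_add]
    simp
  refine ⟨aux_smul_one_unitary (Fin 16) ζ hmul, (aux_smul_one_det (Fin 16) ζ).trans ?_, zeta_not_mem⟩
  rw [Fintype.card_fin, hζ, ← Complex.exp_nat_mul]
  rw [show (16 : ℕ) * (↑Real.pi * Complex.I / 8) = 2 * ↑Real.pi * Complex.I by push_cast; ring]
  exact Complex.exp_two_pi_mul_I
end
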